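/- arXiv:2401.11589 — 3 statements merged into one kernel-verified Lean document; each statement's English description precedes it below -/
import Mathlib

section
/- Let α be a rational number, not 0 or ±1 and not a square in ℚ^×, with τ = 1, and let δ be the discriminant of ℚ(√α). Define dens(α) = A(1)·(1 - μ(|δ|)·f_1(δ)) if δ ≡ 1 (mod 4) and dens(α) = A(1) otherwise. Then dens(α)/A(1) ≤ 6/5, with equality for α = -3 (where δ = -3). -/
open ArithmeticFunction

/-- The Artin constant `A(1) = ∏_ℓ (1 - 1/(ℓ(ℓ-1)))`. -/
noncomputable def artinA1 : ℝ :=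
  ∏' p : Nat.Primes, (1 - 1 / (((p : ℕ) : ℝ) * (((p : ℕ) : ℝ) - 1)))

/-- Hooley's correction factor for `τ = 1`. -/
noncomputable def hooleyF1 (δ : ℤ) : ℝ :=
  ∏ ℓ ∈ δ.natAbs.primeFactors, 1 / ((ℓ : ℝ) ^ 2 - ℓ - 1)

/-- Hooley's density for `τ = 1`, as a function of the discriminant `δ`. -/
noncomputable def hooleyDens1 (δ : ℤ) : ℝ :=
  if δ % 4 = 1 then artinA1 * (1 - (moebius δ.natAbs : ℝ) * hooleyF1 δ)
  else artinA1

/-!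
The correction term `μ(|δ|) f₁(δ)` is at least `-1/5` for odd `δ`: it is nonnegative unless
`μ(|δ|) = -1`, and then `|δ|` has an odd prime factor `ℓ ≥ 3`, contributing
`1/(ℓ² - ℓ - 1) ≤ 1/5`, while every other factor of `f₁(δ)` lies in `(0, 1]`.
Equality holds at `δ = -3`, where `μ(3) = -1` and `f₁(-3) = 1/5`.
-/

lemma artinA1_nonneg : 0 ≤ artinA1 :=
  tprod_nonneg fun p => by
    have hp : (2 : ℝ) ≤ (p : ℕ) := by exact_mod_cast p.2.two_le
    rw [sub_nonneg, div_le_one (by nlinarith)]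
    nlinarith

section HooleyFactor

variable {x : ℝ}

lemma one_div_sq_sub_self_sub_one_pos (hx : 2 ≤ x) : 0 < 1 / (x ^ 2 - x - 1) :=
  one_div_pos.mpr (by nlinarith)

lemma one_div_sq_sub_self_sub_one_le_one (hx : 2 ≤ x) : 1 / (x ^ 2 - x - 1) ≤ 1 := by
  rw [div_le_one (by nlinarith)]
  nlinarith

lemma one_div_sq_sub_self_sub_one_le_one_fifth (hx : 3 ≤ x) : 1 / (x ^ 2 - x - 1) ≤ 1 / 5 := by
  rw [div_le_div_iff₀ (by nlinarith) (by norm_num)]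
  nlinarith

end HooleyFactor

lemma two_le_of_mem_primeFactors {n ℓ : ℕ} (hℓ : ℓ ∈ n.primeFactors) : (2 : ℝ) ≤ ℓ := by
  exact_mod_cast (Nat.prime_of_mem_primeFactors hℓ).two_le

lemma hooleyF1_nonneg (δ : ℤ) : 0 ≤ hooleyF1 δ :=
  Finset.prod_nonneg fun _ hℓ =>
    (one_div_sq_sub_self_sub_one_pos (two_le_of_mem_primeFactors hℓ)).le

lemma hooleyF1_le_one_fifth {δ : ℤ} (hodd : Odd δ) (hunit : δ.natAbs ≠ 1) :
    hooleyF1 δ ≤ 1 / 5 := by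
  obtain ⟨p, hp, hpδ⟩ := Nat.exists_prime_and_dvd hunit
  have hpmem : p ∈ δ.natAbs.primeFactors :=
    Nat.mem_primeFactors.mpr ⟨hp, hpδ, Int.natAbs_ne_zero.mpr (by rintro rfl; simp at hodd)⟩
  have hp_ne_two : p ≠ 2 := by
    rintro rfl
    exact Int.not_even_iff_odd.mpr hodd (even_iff_two_dvd.mpr (Int.ofNat_dvd_left.mpr hpδ))
  have hp3 : (3 : ℝ) ≤ p := by exact_mod_cast (show 3 ≤ p by have := hp.two_le; omega)
  have hfactor_nonneg : ∀ ℓ ∈ δ.natAbs.primeFactors.erase p, 0 ≤ 1 / ((ℓ : ℝ) ^ 2 - ℓ - 1) :=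
    fun _ hℓ => (one_div_sq_sub_self_sub_one_pos
      (two_le_of_mem_primeFactors (Finset.mem_of_mem_erase hℓ))).le
  have hrest : ∏ ℓ ∈ δ.natAbs.primeFactors.erase p, 1 / ((ℓ : ℝ) ^ 2 - ℓ - 1) ≤ 1 :=
    Finset.prod_le_one hfactor_nonneg fun _ hℓ =>
      one_div_sq_sub_self_sub_one_le_one (two_le_of_mem_primeFactors (Finset.mem_of_mem_erase hℓ))
  rw [hooleyF1, ← Finset.mul_prod_erase _ _ hpmem]
  simpa using mul_le_mul (one_div_sq_sub_self_sub_one_le_one_fifth hp3) hrest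
    (Finset.prod_nonneg hfactor_nonneg) (by norm_num)

lemma neg_one_fifth_le_moebius_mul_hooleyF1 {δ : ℤ} (hodd : Odd δ) :
    -(1 / 5) ≤ (moebius δ.natAbs : ℝ) * hooleyF1 δ := by
  by_cases hunit : δ.natAbs = 1
  · rw [hunit, moebius_apply_one, hooleyF1, hunit, Nat.primeFactors_one]
    norm_num
  have hμ : (-1 : ℝ) ≤ moebius δ.natAbs := by
    exact_mod_cast (abs_le.mp abs_moebius_le_one).1
  nlinarith [hooleyF1_nonneg δ, hooleyF1_le_one_fifth hodd hunit]

lemma hooleyDens1_le (δ : ℤ) : hooleyDens1 δ ≤ 6 / 5 * artinA1 := by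
  have hA := artinA1_nonneg
  unfold hooleyDens1
  split_ifs with h4
  · have hodd : Odd δ := Int.odd_iff.mpr (by omega)
    nlinarith [neg_one_fifth_le_moebius_mul_hooleyF1 hodd]
  · linarith

lemma hooleyDens1_neg_three : hooleyDens1 (-3) = 6 / 5 * artinA1 := by
  have hnatAbs : (-3 : ℤ).natAbs = 3 := rfl
  rw [hooleyDens1, if_pos (by decide), hooleyF1, hnatAbs, moebius_apply_prime Nat.prime_three,
    Nat.prime_three.primeFactors]
  norm_num
  ring

theorem dens_le_six_fifths_A1_general (δ : ℤ) :
    hooleyDens1 δ ≤ 6 / 5 * artinA1 ∧ hooleyDens1 (-3) = 6 / 5 * artinA1 :=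
  ⟨hooleyDens1_le δ, hooleyDens1_neg_three⟩

theorem dens_le_six_fifths_A1 (α : ℚ) (δ : ℤ)
    (h0 : α ≠ 0) (h1 : α ≠ 1) (hm1 : α ≠ -1)
    (hτ : ∀ n : ℕ, 2 ≤ n → ¬∃ β : ℚ, β ^ n = α)
    (hsf : Squarefree δ) (hδ : ∃ β : ℚ, α = (δ : ℚ) * β ^ 2) :
    hooleyDens1 δ ≤ 6 / 5 * artinA1 ∧ hooleyDens1 (-3) = 6 / 5 * artinA1 :=
  dens_le_six_fifths_A1_general δ
end

section
/- Let α ∈ ℚ \ {0, ±1} be not a square, τ the largest integer with α ∈ (ℚ^×)^τ, and δ the discriminant of ℚ(√α). Define dens(α) = A(τ)·(1 - μ(|δ|)·f_τ(δ)) if δ ≡ 1 (mod 4) and dens(α) = A(τ) otherwise. Then 2/3 ≤ dens(α)/A(τ) ≤ 2 whenever A(τ) ≠ 0, and both bounds are attained (at α = (-15)^15 and α = (-3)^3 respectively). -/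
open ArithmeticFunction

/-- The Artin constant `A(τ)`. -/
noncomputable def artinA (τ : ℕ) : ℝ :=
  ∏' p : Nat.Primes,
    if (p : ℕ) ∣ τ then (1 - 1 / (((p : ℕ) : ℝ) - 1))
    else (1 - 1 / (((p : ℕ) : ℝ) * (((p : ℕ) : ℝ) - 1)))

/-- Hooley's correction factor `f_τ(δ)`. -/
noncomputable def hooleyF (τ : ℕ) (δ : ℤ) : ℝ :=
  ∏ ℓ ∈ δ.natAbs.primeFactors,
    if ℓ ∣ τ then 1 / ((ℓ : ℝ) - 2) else 1 / ((ℓ : ℝ) ^ 2 - ℓ - 1)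

/-- Hooley's density, as a function of `τ` and the discriminant `δ`. -/
noncomputable def hooleyDens (τ : ℕ) (δ : ℤ) : ℝ :=
  if δ % 4 = 1 then artinA τ * (1 - (moebius δ.natAbs : ℝ) * hooleyF τ δ)
  else artinA τ

/-!
Away from `δ ≡ 1 (mod 4)` the ratio is `1`; otherwise it is `1 - μ(|δ|) f_τ(δ)`. Every local factor
of `f_τ(δ)` lies in `[0, 1]`, and in `[0, 1/3]` at primes `ℓ ≥ 5`. If `μ(|δ|) = -1` the ratio is
`1 + f_τ(δ) ∈ [1, 2]`. If `μ(|δ|) = 1`, then `|δ| ≠ 1` (as `α` is not a square) is a product of at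
least two distinct odd primes, one of which is `≥ 5`, so `f_τ(δ) ≤ 1/3` and the ratio is in
`[2/3, 1]`. For the extremal examples one needs `A(τ) ≠ 0` for odd `τ`: the Euler product converges
absolutely and, as `2 ∤ τ`, none of its factors vanishes.
-/

noncomputable def hooleyFactor (τ ℓ : ℕ) : ℝ :=
  if ℓ ∣ τ then 1 / ((ℓ : ℝ) - 2) else 1 / ((ℓ : ℝ) ^ 2 - ℓ - 1)

section hooleyFactor

variable (τ : ℕ) {ℓ : ℕ}

theorem hooleyFactor_nonneg (hℓ : 2 ≤ ℓ) : 0 ≤ hooleyFactor τ ℓ := by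
  have h : (2 : ℝ) ≤ ℓ := by exact_mod_cast hℓ
  unfold hooleyFactor
  split_ifs
  · exact one_div_nonneg.mpr (by linarith)
  · exact one_div_nonneg.mpr (by nlinarith)

theorem hooleyFactor_le_one (hℓ : 2 ≤ ℓ) : hooleyFactor τ ℓ ≤ 1 := by
  unfold hooleyFactor
  obtain rfl | hℓ3 := hℓ.eq_or_lt
  · split_ifs <;> norm_num
  have h : (3 : ℝ) ≤ ℓ := by exact_mod_cast hℓ3
  split_ifs
  · rw [div_le_one (by linarith)]; linarith
  · rw [div_le_one (by nlinarith)]; nlinarith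

theorem hooleyFactor_le_one_third (hℓ : 5 ≤ ℓ) : hooleyFactor τ ℓ ≤ 1 / 3 := by
  have h : (5 : ℝ) ≤ ℓ := by exact_mod_cast hℓ
  unfold hooleyFactor
  split_ifs
  · rw [div_le_div_iff₀ (by linarith) (by norm_num)]; linarith
  · rw [div_le_div_iff₀ (by nlinarith) (by norm_num)]; nlinarith

end hooleyFactor

section hooleyF

variable (τ : ℕ) {δ : ℤ}

theorem hooleyF_eq_prod_hooleyFactor :
    hooleyF τ δ = ∏ ℓ ∈ δ.natAbs.primeFactors, hooleyFactor τ ℓ := rfl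

theorem hooleyF_nonneg : 0 ≤ hooleyF τ δ :=
  Finset.prod_nonneg fun _ hℓ ↦ hooleyFactor_nonneg τ (Nat.prime_of_mem_primeFactors hℓ).two_le

theorem hooleyF_le_one : hooleyF τ δ ≤ 1 :=
  Finset.prod_le_one (fun _ hℓ ↦ hooleyFactor_nonneg τ (Nat.prime_of_mem_primeFactors hℓ).two_le)
    fun _ hℓ ↦ hooleyFactor_le_one τ (Nat.prime_of_mem_primeFactors hℓ).two_le

theorem hooleyF_le_one_third (hodd : Odd δ) (hcard : 2 ≤ δ.natAbs.primeFactors.card) :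
    hooleyF τ δ ≤ 1 / 3 := by
  obtain ⟨ℓ, hℓ, hℓ3⟩ := Finset.exists_mem_ne hcard 3
  have hprime := Nat.prime_of_mem_primeFactors hℓ
  have hℓ2 : ℓ ≠ 2 := by
    rintro rfl
    exact Int.not_even_iff_odd.mpr hodd
      (even_iff_two_dvd.mpr (Int.ofNat_dvd_left.mpr (Nat.dvd_of_mem_primeFactors hℓ)))
  have hℓ5 : 5 ≤ ℓ := by
    have := hprime.two_le
    have : ℓ ≠ 4 := by rintro rfl; norm_num at hprime
    omega
  have hrest : ∀ q ∈ δ.natAbs.primeFactors.erase ℓ, 2 ≤ q := fun _ hq ↦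
    (Nat.prime_of_mem_primeFactors (Finset.mem_of_mem_erase hq)).two_le
  rw [hooleyF_eq_prod_hooleyFactor, ← Finset.mul_prod_erase _ _ hℓ]
  exact (mul_le_of_le_one_right (hooleyFactor_nonneg τ hprime.two_le)
    (Finset.prod_le_one (fun q hq ↦ hooleyFactor_nonneg τ (hrest q hq))
      fun q hq ↦ hooleyFactor_le_one τ (hrest q hq))).trans (hooleyFactor_le_one_third τ hℓ5)

end hooleyF

theorem ArithmeticFunction.two_le_card_primeFactors_of_moebius_eq_one {n : ℕ}
    (hμ : moebius n = 1) (hn : n ≠ 1) : 2 ≤ n.primeFactors.card := by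
  by_contra! hcard
  interval_cases h : n.primeFactors.card
  · rcases Nat.primeFactors_eq_empty.mp (Finset.card_eq_zero.mp h) with rfl | rfl
    · simp at hμ
    · exact hn rfl
  · have hpow : IsPrimePow n := isPrimePow_iff_card_primeFactors_eq_one.mpr h
    by_cases hp : n.Prime
    · simp [moebius_apply_prime hp] at hμ
    · simp [moebius_apply_isPrimePow_not_prime hpow hp] at hμ

theorem one_sub_moebius_mul_hooleyF_mem_Icc (τ : ℕ) {δ : ℤ} (hsf : Squarefree δ) (hδ1 : δ ≠ 1)
    (hδ4 : δ % 4 = 1) :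
    2 / 3 ≤ 1 - (moebius δ.natAbs : ℝ) * hooleyF τ δ ∧
      1 - (moebius δ.natAbs : ℝ) * hooleyF τ δ ≤ 2 := by
  have hF0 := hooleyF_nonneg τ (δ := δ)
  have hF1 := hooleyF_le_one τ (δ := δ)
  rcases moebius_ne_zero_iff_eq_or.mp
    (moebius_ne_zero_iff_squarefree.mpr (Int.squarefree_natAbs.mpr hsf)) with hμ | hμ
  · have hodd : Odd δ := Int.odd_iff.mpr (by omega)
    have habs : δ.natAbs ≠ 1 := by omega
    have hF := hooleyF_le_one_third τ hodd (two_le_card_primeFactors_of_moebius_eq_one hμ habs)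
    rw [hμ]
    push_cast
    constructor <;> linarith
  · rw [hμ]
    push_cast
    constructor <;> linarith

theorem hooleyDens_div_artinA {τ : ℕ} {δ : ℤ} (hA : artinA τ ≠ 0) :
    hooleyDens τ δ / artinA τ =
      if δ % 4 = 1 then 1 - (moebius δ.natAbs : ℝ) * hooleyF τ δ else 1 := by
  unfold hooleyDens
  split_ifs
  · exact mul_div_cancel_left₀ _ hA
  · exact div_self hA

theorem hooleyDens_div_artinA_mem_Icc {τ : ℕ} {δ : ℤ} (hsf : Squarefree δ) (hδ1 : δ ≠ 1)
    (hA : artinA τ ≠ 0) :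
    2 / 3 ≤ hooleyDens τ δ / artinA τ ∧ hooleyDens τ δ / artinA τ ≤ 2 := by
  rw [hooleyDens_div_artinA hA]
  split_ifs with hδ4
  · exact one_sub_moebius_mul_hooleyF_mem_Icc τ hsf hδ1 hδ4
  · norm_num

theorem artinA_ne_zero {τ : ℕ} (hτ : ¬ 2 ∣ τ) : artinA τ ≠ 0 := by
  set f : Nat.Primes → ℝ := fun p ↦ if (p : ℕ) ∣ τ then -(1 / (((p : ℕ) : ℝ) - 1))
    else -(1 / (((p : ℕ) : ℝ) * (((p : ℕ) : ℝ) - 1))) with hf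
  have hA : artinA τ = ∏' p, (1 + f p) := by
    unfold artinA
    congr 1 with p
    simp only [hf]
    split_ifs <;> ring
  have hfactor : ∀ p, 1 + f p ≠ 0 := by
    intro p
    have hp : (2 : ℝ) ≤ (p : ℕ) := by exact_mod_cast p.2.two_le
    simp only [hf]
    split_ifs with hdvd
    · have hp3 : (3 : ℝ) ≤ (p : ℕ) := by
        have : (p : ℕ) ≠ 2 := fun h ↦ hτ (h ▸ hdvd)
        exact_mod_cast (show 3 ≤ (p : ℕ) by have := p.2.two_le; omega)
      have : 1 / (((p : ℕ) : ℝ) - 1) ≤ 1 / 2 := by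
        rw [div_le_div_iff₀ (by linarith) (by norm_num)]; linarith
      linarith
    · have : 1 / (((p : ℕ) : ℝ) * (((p : ℕ) : ℝ) - 1)) ≤ 1 / 2 := by
        rw [div_le_div_iff₀ (by nlinarith) (by norm_num)]; nlinarith
      linarith
  have hsummable : Summable fun p ↦ ‖f p‖ := by
    refine Summable.of_norm_bounded_eventually
      (((Real.summable_one_div_nat_pow.mpr one_lt_two).comp_injective
        Nat.Primes.coe_nat_injective).mul_left 2) ?_
    have hlarge : ∀ᶠ p : Nat.Primes in Filter.cofinite, τ < p :=
      Nat.Primes.coe_nat_injective.tendsto_cofinite.eventually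
        (Nat.cofinite_eq_atTop ▸ Filter.eventually_gt_atTop τ)
    filter_upwards [hlarge] with p hp
    have hτ0 : τ ≠ 0 := by rintro rfl; exact hτ (dvd_zero 2)
    have hndvd : ¬ (p : ℕ) ∣ τ := Nat.not_dvd_of_pos_of_lt (Nat.pos_of_ne_zero hτ0) hp
    have hp2 : (2 : ℝ) ≤ (p : ℕ) := by exact_mod_cast p.2.two_le
    have hp1 : (0 : ℝ) < ((p : ℕ) : ℝ) * (((p : ℕ) : ℝ) - 1) := by nlinarith
    simp only [hf, if_neg hndvd, norm_norm, norm_neg]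
    show ‖1 / (((p : ℕ) : ℝ) * (((p : ℕ) : ℝ) - 1))‖ ≤ 2 * (1 / ((p : ℕ) : ℝ) ^ 2)
    rw [Real.norm_of_nonneg (one_div_nonneg.mpr hp1.le), mul_one_div,
      div_le_div_iff₀ hp1 (by positivity)]
    nlinarith
  exact hA ▸ tprod_one_add_ne_zero_of_summable hfactor hsummable

theorem hooleyDens_div_artinA_fifteen : hooleyDens 15 (-15) / artinA 15 = 2 / 3 := by
  have hμ : moebius 15 = 1 := by
    rw [show 15 = 3 * 5 by rfl, isMultiplicative_moebius.map_mul_of_coprime (by norm_num),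
      moebius_apply_prime (by norm_num), moebius_apply_prime (by norm_num)]
    rfl
  have hF : hooleyF 15 (-15) = 1 / 3 := by
    rw [hooleyF_eq_prod_hooleyFactor, show (-15 : ℤ).natAbs = 3 * 5 by rfl,
      Nat.primeFactors_mul (by norm_num) (by norm_num), Nat.Prime.primeFactors (by norm_num),
      Nat.Prime.primeFactors (by norm_num), Finset.prod_union (by decide)]
    norm_num [hooleyFactor]
  rw [hooleyDens_div_artinA (artinA_ne_zero (by decide)), if_pos (by decide),
    show (-15 : ℤ).natAbs = 15 by rfl, hμ, hF]
  norm_num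

theorem hooleyDens_div_artinA_three : hooleyDens 3 (-3) / artinA 3 = 2 := by
  have hF : hooleyF 3 (-3) = 1 := by
    rw [hooleyF_eq_prod_hooleyFactor, show (-3 : ℤ).natAbs = 3 by rfl,
      Nat.Prime.primeFactors (by norm_num)]
    norm_num [hooleyFactor]
  rw [hooleyDens_div_artinA (artinA_ne_zero (by decide)), if_pos (by decide),
    show (-3 : ℤ).natAbs = 3 by rfl, moebius_apply_prime (by norm_num), hF]
  norm_num

theorem dens_ratio_bounds_general (α : ℚ) (τ : ℕ) (δ : ℤ)
    (hsq : ¬∃ β : ℚ, β ^ 2 = α)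
    (hsf : Squarefree δ) (hδ : ∃ β : ℚ, α = (δ : ℚ) * β ^ 2)
    (hA : artinA τ ≠ 0) :
    (2 / 3 ≤ hooleyDens τ δ / artinA τ ∧ hooleyDens τ δ / artinA τ ≤ 2) ∧
    hooleyDens 15 (-15) / artinA 15 = 2 / 3 ∧
    hooleyDens 3 (-3) / artinA 3 = 2 := by
  have hδ1 : δ ≠ 1 := by
    rintro rfl
    obtain ⟨β, hβ⟩ := hδ
    exact hsq ⟨β, by simp [hβ]⟩
  exact ⟨hooleyDens_div_artinA_mem_Icc hsf hδ1 hA, hooleyDens_div_artinA_fifteen,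
    hooleyDens_div_artinA_three⟩

theorem dens_ratio_bounds (α : ℚ) (τ : ℕ) (δ : ℤ)
    (h0 : α ≠ 0) (h1 : α ≠ 1) (hm1 : α ≠ -1)
    (hsq : ¬∃ β : ℚ, β ^ 2 = α)
    (hτ : (∃ β : ℚ, β ^ τ = α) ∧ ∀ n : ℕ, (∃ β : ℚ, β ^ n = α) → n ≤ τ)
    (hsf : Squarefree δ) (hδ : ∃ β : ℚ, α = (δ : ℚ) * β ^ 2)
    (hA : artinA τ ≠ 0) :
    (2 / 3 ≤ hooleyDens τ δ / artinA τ ∧ hooleyDens τ δ / artinA τ ≤ 2) ∧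
    hooleyDens 15 (-15) / artinA 15 = 2 / 3 ∧
    hooleyDens 3 (-3) / artinA 3 = 2 :=
  dens_ratio_bounds_general α τ δ hsq hsf hδ hA
end

section
/- Let K be a number field, ℓ an odd prime with ζ_ℓ ∉ K and [K(ζ_ℓ) : K] = ℓ - 1, and G ≤ K^× a finitely generated torsion-free subgroup. Let r_ℓ be the rank of G/(G ∩ (K^×)^ℓ). Then the rank of G/(G ∩ (K(ζ_ℓ)^×)^ℓ) equals r_ℓ, and hence [K(ζ_ℓ, G^{1/ℓ}) : K] = ℓ^{r_ℓ}(ℓ-1). -/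
/-!
Since `[K(ζ_ℓ) : K] = ℓ - 1` is prime to `ℓ`, an element of `K^×` that is an `ℓ`-th power in
`K(ζ_ℓ)` is already one in `K`: if `v ^ ℓ = u` then `N(v) ^ ℓ = u ^ (ℓ - 1)`, and a Bézout
combination of the exponents extracts an `ℓ`-th root of `u`. Hence `G ∩ (K(ζ_ℓ)^×)^ℓ` is
`G ∩ (K^×)^ℓ` and the two quotients agree.

For the degree, adjoin to `F = K(ζ_ℓ)` the `ℓ`-th roots `b` of generators `a` of `G` one at a time.
If `a` is an `ℓ`-th power in the current field `E`, then `b ∈ E`. Otherwise `E(b)/E` is cyclic of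
degree `ℓ`, and every `x ∈ E(b)` with `x ^ ℓ ∈ E` is `e * b ^ j` with `e ∈ E`, so the subgroup of
`F^×` becoming `ℓ`-th powers grows exactly by `⟨a⟩`, of index `ℓ`. By induction `[F(G^{1/ℓ}) : F]`
is the index of `(F^×)^ℓ` in `G (F^×)^ℓ`, i.e. `ℓ ^ r_ℓ`.
-/

open IntermediateField

/-- The `ℓ`-th cyclotomic extension `K(ζ_ℓ)` of `K` inside an algebraic closure. -/
noncomputable def cycField (K : Type*) [Field K] (ℓ : ℕ) :
    IntermediateField K (AlgebraicClosure K) :=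
  IntermediateField.adjoin K {x : AlgebraicClosure K | x ^ ℓ = 1}

/-- The cyclotomic-Kummer extension `K(ζ_ℓ, G^{1/ℓ})` of `K`. -/
noncomputable def cycKummerField (K : Type*) [Field K] (ℓ : ℕ) (G : Subgroup Kˣ) :
    IntermediateField K (AlgebraicClosure K) :=
  IntermediateField.adjoin K
    {x : AlgebraicClosure K |
      x ^ ℓ = 1 ∨ ∃ g ∈ G, x ^ ℓ = algebraMap K (AlgebraicClosure K) (g : K)}

/-- The subgroup of `ℓ`-th powers `(F^×)^ℓ` of the unit group of a field `F`. -/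
def powSubgroup (F : Type*) [Field F] (ℓ : ℕ) : Subgroup Fˣ :=
  (powMonoidHom ℓ : Fˣ →* Fˣ).range

theorem mem_range_powMonoidHom_of_pow_mem {M : Type*} [CommGroup M] {d ℓ : ℕ}
    (hdℓ : d.Coprime ℓ) {u : M} (hu : u ^ d ∈ (powMonoidHom ℓ : M →* M).range) :
    u ∈ (powMonoidHom ℓ : M →* M).range := by
  obtain ⟨w, hw⟩ := hu
  refine ⟨w ^ d.gcdA ℓ * u ^ d.gcdB ℓ, ?_⟩
  have hw' : w ^ ℓ = u ^ d := hw
  calc (w ^ d.gcdA ℓ * u ^ d.gcdB ℓ) ^ ℓ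
      = (w ^ ℓ) ^ d.gcdA ℓ * u ^ (ℓ * d.gcdB ℓ) := by
        rw [mul_pow, ← zpow_natCast, ← zpow_natCast, ← zpow_natCast, ← zpow_mul, ← zpow_mul,
          ← zpow_mul, mul_comm (d.gcdA ℓ), mul_comm (d.gcdB ℓ)]
    _ = u ^ ((d.gcd ℓ : ℕ) : ℤ) := by
        rw [hw', ← zpow_natCast, ← zpow_mul, ← zpow_add, Nat.gcd_eq_gcd_ab]
    _ = u := by rw [hdℓ, Nat.cast_one, zpow_one]

theorem Subgroup.relIndex_sup_zpowers_of_pow_mem {G : Type*} [CommGroup G] {H : Subgroup G}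
    {g : G} {p : ℕ} [Fact p.Prime] (hgp : g ^ p ∈ H) (hg : g ∉ H) :
    H.relIndex (H ⊔ Subgroup.zpowers g) = p := by
  rw [Subgroup.relIndex_sup_left, ← QuotientGroup.ker_mk' H, ← MonoidHom.comap_bot,
    Subgroup.relIndex_comap, MonoidHom.map_zpowers, Subgroup.relIndex_bot_left,
    Nat.card_zpowers]
  refine orderOf_eq_prime ?_ ?_
  · rwa [← map_pow, QuotientGroup.mk'_apply, QuotientGroup.eq_one_iff]
  · rwa [QuotientGroup.mk'_apply, Ne, QuotientGroup.eq_one_iff]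

/-- `F^× ∩ (E^×)^ℓ`; for `E = F(ζ_ℓ, A^{1/ℓ})` it is the group `A (F^×)^ℓ` of Kummer theory. -/
def kummerSubgroup (F E : Type*) [Field F] [Field E] [Algebra F E] (ℓ : ℕ) : Subgroup Fˣ :=
  (powSubgroup E ℓ).comap (Units.map (algebraMap F E).toMonoidHom)

theorem powSubgroup_le_kummerSubgroup (F E : Type*) [Field F] [Field E] [Algebra F E] (ℓ : ℕ) :
    powSubgroup F ℓ ≤ kummerSubgroup F E ℓ := by
  rintro _ ⟨v, rfl⟩
  exact ⟨Units.map (algebraMap F E).toMonoidHom v, (map_pow _ v ℓ).symm⟩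

theorem kummerSubgroup_eq_powSubgroup_of_coprime (F E : Type*) [Field F] [Field E] [Algebra F E]
    [FiniteDimensional F E] {ℓ : ℕ} (hℓ : (Module.finrank F E).Coprime ℓ) :
    kummerSubgroup F E ℓ = powSubgroup F ℓ := by
  refine le_antisymm (fun u ⟨v, hv⟩ => ?_) (powSubgroup_le_kummerSubgroup F E ℓ)
  refine mem_range_powMonoidHom_of_pow_mem hℓ ⟨Units.map (Algebra.norm F (S := E)) v, ?_⟩
  ext
  have hv' : (v : E) ^ ℓ = algebraMap F E u := congrArg Units.val hv
  simp only [powMonoidHom_apply, Units.val_pow_eq_pow_val, Units.coe_map]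
  rw [← map_pow, hv', Algebra.norm_algebraMap]

section RadicalExtension

open Polynomial

theorem finrank_adjoin_simple_of_pow_eq {E Ω : Type*} [Field E] [Field Ω] [Algebra E Ω]
    {ℓ : ℕ} (hℓ : ℓ.Prime) {a : E} (ha : ∀ y : E, y ^ ℓ ≠ a) {θ : Ω}
    (hθ : θ ^ ℓ = algebraMap E Ω a) : Module.finrank E E⟮θ⟯ = ℓ := by
  have hint : IsIntegral E θ :=
    ⟨X ^ ℓ - C a, monic_X_pow_sub_C a hℓ.ne_zero, by simp [hθ]⟩
  have hminpoly : minpoly E θ = X ^ ℓ - C a :=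
    (minpoly.eq_of_irreducible_of_monic (X_pow_sub_C_irreducible_of_prime hℓ ha)
      (by simp [hθ]) (monic_X_pow_sub_C a hℓ.ne_zero)).symm
  rw [adjoin.finrank hint, hminpoly, natDegree_X_pow_sub_C]

theorem isSplittingField_adjoin_simple_of_pow_eq {E Ω : Type*} [Field E] [Field Ω]
    [Algebra E Ω] {ℓ : ℕ} (hℓ : ℓ.Prime) {ζ : E} (hζ : IsPrimitiveRoot ζ ℓ) {a : E}
    (ha : ∀ y : E, y ^ ℓ ≠ a) {θ : Ω} (hθ : θ ^ ℓ = algebraMap E Ω a) :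
    IsSplittingField E E⟮θ⟯ (X ^ ℓ - C a) := by
  have hfr := finrank_adjoin_simple_of_pow_eq hℓ ha hθ
  have : FiniteDimensional E E⟮θ⟯ := .of_finrank_pos (hfr ▸ hℓ.pos)
  have hθ' : AdjoinSimple.gen E θ ^ Module.finrank E E⟮θ⟯ = algebraMap E E⟮θ⟯ a := by
    apply (algebraMap E⟮θ⟯ Ω).injective
    rw [map_pow, AdjoinSimple.algebraMap_gen, hfr, hθ, ← IsScalarTower.algebraMap_apply]
  have htop : E⟮AdjoinSimple.gen E θ⟯ = ⊤ := by
    apply lift_injective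
    rw [lift_adjoin_simple, lift_top, AdjoinSimple.coe_gen]
  have hprim : (primitiveRoots (Module.finrank E E⟮θ⟯) E).Nonempty :=
    ⟨ζ, (mem_primitiveRoots (hfr ▸ hℓ.pos)).2 (hfr ▸ hζ)⟩
  simpa only [hfr] using isSplittingField_X_pow_sub_C_of_root_adjoin_eq_top hprim hθ' htop

theorem exists_generator_gal_adjoin_simple_of_pow_eq {E Ω : Type*} [Field E] [Field Ω]
    [Algebra E Ω] {ℓ : ℕ} (hℓ : ℓ.Prime) {ζ : E} (hζ : IsPrimitiveRoot ζ ℓ) {a : E}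
    (ha : ∀ y : E, y ^ ℓ ≠ a) {θ : Ω} (hθ : θ ^ ℓ = algebraMap E Ω a) :
    ∃ σ : Gal(E⟮θ⟯/E),
      σ (AdjoinSimple.gen E θ) = algebraMap E E⟮θ⟯ ζ * AdjoinSimple.gen E θ ∧
      ∀ τ : Gal(E⟮θ⟯/E), ∃ k : ℕ, τ = σ ^ k := by
  have := isSplittingField_adjoin_simple_of_pow_eq hℓ hζ ha hθ
  have : NeZero ℓ := ⟨hℓ.ne_zero⟩
  have hirr := X_pow_sub_C_irreducible_of_prime hℓ ha
  have hθ' : AdjoinSimple.gen E θ ^ ℓ = algebraMap E E⟮θ⟯ a := by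
    apply (algebraMap E⟮θ⟯ Ω).injective
    rw [map_pow, AdjoinSimple.algebraMap_gen, hθ, ← IsScalarTower.algebraMap_apply]
  set e := autEquivZmod hirr E⟮θ⟯ hζ
  refine ⟨e.symm (Multiplicative.ofAdd 1), ?_, fun τ ↦ ⟨(Multiplicative.toAdd (e τ)).val, ?_⟩⟩
  · simpa [Algebra.smul_def] using autEquivZmod_symm_apply_natCast hirr E⟮θ⟯ hθ' hζ 1
  · apply e.injective
    rw [map_pow, MulEquiv.apply_symm_apply, ← ofAdd_nsmul, nsmul_one, ZMod.natCast_zmod_val,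
      ofAdd_toAdd]

theorem exists_eq_algebraMap_mul_pow_of_mem_adjoin_simple {E Ω : Type*} [Field E] [Field Ω]
    [Algebra E Ω] {ℓ : ℕ} (hℓ : ℓ.Prime) {ζ : E} (hζ : IsPrimitiveRoot ζ ℓ) {a : E}
    (ha : ∀ y : E, y ^ ℓ ≠ a) {θ : Ω} (hθ : θ ^ ℓ = algebraMap E Ω a) {x : Ω} (hx : x ∈ E⟮θ⟯)
    {c : E} (hxc : x ^ ℓ = algebraMap E Ω c) :
    ∃ (e : E) (j : ℕ), x = algebraMap E Ω e * θ ^ j := by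
  by_cases hx0 : x = 0
  · exact ⟨0, 0, by simp [hx0]⟩
  have : NeZero ℓ := ⟨hℓ.ne_zero⟩
  have := isSplittingField_adjoin_simple_of_pow_eq hℓ hζ ha hθ
  have := isGalois_of_isSplittingField_X_pow_sub_C ⟨ζ, (mem_primitiveRoots hℓ.pos).2 hζ⟩
    (X_pow_sub_C_irreducible_of_prime hℓ ha) E⟮θ⟯
  have : FiniteDimensional E E⟮θ⟯ :=
    .of_finrank_pos (finrank_adjoin_simple_of_pow_eq hℓ ha hθ ▸ hℓ.pos)
  obtain ⟨σ, hσθ, hσ⟩ := exists_generator_gal_adjoin_simple_of_pow_eq hℓ hζ ha hθ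
  have hζ' := hζ.map_of_injective (algebraMap E E⟮θ⟯).injective
  set θ' := AdjoinSimple.gen E θ
  set x' : E⟮θ⟯ := ⟨x, hx⟩
  have hθ0 : θ ≠ 0 := by
    rintro rfl
    exact ha 0 ((algebraMap E Ω).injective (by rw [map_pow, map_zero, hθ]))
  have hθ'0 : θ' ≠ 0 := fun h ↦ hθ0 (by simpa [θ'] using congrArg Subtype.val h)
  have hx'0 : x' ≠ 0 := fun h ↦ hx0 (congrArg Subtype.val h)
  have hσx'ℓ : σ x' ^ ℓ = x' ^ ℓ := by
    have hx'c : x' ^ ℓ = algebraMap E E⟮θ⟯ c := Subtype.ext hxc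
    rw [← map_pow, hx'c, AlgEquiv.commutes]
  -- `σ` scales `x'` by some `ζ ^ j` and `θ' ^ j` by the same factor, so `x' / θ' ^ j` is invariant.
  obtain ⟨j, -, hj⟩ := hζ'.eq_pow_of_pow_eq_one
    (show (σ x' / x') ^ ℓ = 1 by rw [div_pow, hσx'ℓ, div_self (pow_ne_zero _ hx'0)])
  have hσx' : σ x' = algebraMap E E⟮θ⟯ ζ ^ j * x' := by rw [hj, div_mul_cancel₀ _ hx'0]
  have hfix : σ (x' / θ' ^ j) = x' / θ' ^ j := by
    rw [map_div₀, map_pow, hσθ, hσx', mul_pow,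
      mul_div_mul_left _ _ (pow_ne_zero _ (hζ'.ne_zero hℓ.ne_zero))]
  obtain ⟨e, he⟩ := (IsGalois.mem_range_algebraMap_iff_fixed (x' / θ' ^ j)).2 fun τ ↦ by
    obtain ⟨k, rfl⟩ := hσ τ
    rw [AlgEquiv.coe_pow]
    exact Function.IsFixedPt.iterate hfix k
  refine ⟨e, j, ?_⟩
  simpa [x', θ'] using congrArg Subtype.val ((div_eq_iff (pow_ne_zero j hθ'0)).1 he.symm)

end RadicalExtension

namespace IntermediateField

variable {F Ω : Type*} [Field F] [Field Ω] [Algebra F Ω] {ℓ : ℕ}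

theorem mem_kummerSubgroup_iff (hℓ : ℓ ≠ 0) {E : IntermediateField F Ω} {u : Fˣ} :
    u ∈ kummerSubgroup F E ℓ ↔ ∃ y ∈ E, y ^ ℓ = algebraMap F Ω u := by
  constructor
  · rintro ⟨v, hv⟩
    exact ⟨(v : E), (v : E).2, congrArg (fun w : Eˣ ↦ ((w : E) : Ω)) hv⟩
  · rintro ⟨y, hy, hyu⟩
    have hy0 : (⟨y, hy⟩ : E) ≠ 0 := by
      rintro ⟨⟩
      exact (map_ne_zero (algebraMap F Ω)).2 u.ne_zero (by rw [← hyu, zero_pow hℓ])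
    exact ⟨Units.mk0 _ hy0, Units.ext (Subtype.ext hyu)⟩

theorem kummerSubgroup_mono {E E' : IntermediateField F Ω} (h : E ≤ E') :
    kummerSubgroup F E ℓ ≤ kummerSubgroup F E' ℓ := by
  rintro u ⟨v, hv⟩
  exact ⟨Units.map (inclusion h).toMonoidHom v, Units.ext (Subtype.ext (congrArg
    (fun w : Eˣ ↦ ((w : E) : Ω)) hv))⟩

theorem mem_of_pow_eq_of_mem_kummerSubgroup (hℓ : ℓ ≠ 0) {E : IntermediateField F Ω}
    (hμ : ∀ z : Ω, z ^ ℓ = 1 → z ∈ E) {u : Fˣ} (hu : u ∈ kummerSubgroup F E ℓ) {x : Ω}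
    (hx : x ^ ℓ = algebraMap F Ω u) : x ∈ E := by
  obtain ⟨y, hy, hyu⟩ := (mem_kummerSubgroup_iff hℓ).1 hu
  have hu0 : algebraMap F Ω u ≠ 0 := (map_ne_zero _).2 u.ne_zero
  have hy0 : y ≠ 0 := by
    rintro rfl
    exact hu0 (by rw [← hyu, zero_pow hℓ])
  have hxy : (x / y) ^ ℓ = 1 := by rw [div_pow, hx, hyu, div_self hu0]
  simpa [div_mul_cancel₀ x hy0] using E.mul_mem (hμ _ hxy) hy

theorem adjoin_simple_eq_bot_of_mem_kummerSubgroup (hℓ : ℓ ≠ 0) {ζ : F}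
    (hζ : IsPrimitiveRoot ζ ℓ) {E : IntermediateField F Ω} {a : Fˣ} {b : Ω}
    (hb : b ^ ℓ = algebraMap F Ω a) (ha : a ∈ kummerSubgroup F E ℓ) : E⟮b⟯ = ⊥ := by
  have : NeZero ℓ := ⟨hℓ⟩
  have hμ (z : Ω) (hz : z ^ ℓ = 1) : z ∈ E := by
    obtain ⟨j, -, rfl⟩ := (hζ.map_of_injective (algebraMap F Ω).injective).eq_pow_of_pow_eq_one hz
    exact pow_mem (E.algebraMap_mem ζ) j
  exact adjoin_simple_eq_bot_iff.2 (mem_bot.2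
    ⟨⟨b, mem_of_pow_eq_of_mem_kummerSubgroup hℓ hμ ha hb⟩, rfl⟩)

theorem kummerSubgroup_restrictScalars_adjoin_simple (hℓ : ℓ.Prime) {ζ : F}
    (hζ : IsPrimitiveRoot ζ ℓ) {E : IntermediateField F Ω} {a : Fˣ} {b : Ω}
    (hb : b ^ ℓ = algebraMap F Ω a) :
    kummerSubgroup F (restrictScalars F E⟮b⟯) ℓ =
      kummerSubgroup F E ℓ ⊔ Subgroup.zpowers a := by
  by_cases ha : a ∈ kummerSubgroup F E ℓ
  · rw [adjoin_simple_eq_bot_of_mem_kummerSubgroup hℓ.ne_zero hζ hb ha,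
      restrictScalars_bot_eq_self, sup_eq_left.2 (Subgroup.zpowers_le.2 ha)]
  refine le_antisymm ?_ (sup_le (kummerSubgroup_mono fun x hx ↦ E⟮b⟯.algebraMap_mem ⟨x, hx⟩)
    (Subgroup.zpowers_le.2 ((mem_kummerSubgroup_iff hℓ.ne_zero).2
      ⟨b, mem_adjoin_simple_self E b, hb⟩)))
  intro u hu
  obtain ⟨x, hx, hxu⟩ := (mem_kummerSubgroup_iff hℓ.ne_zero).1 hu
  have haE (y : E) : y ^ ℓ ≠ algebraMap F E a := fun hy ↦
    ha ((mem_kummerSubgroup_iff hℓ.ne_zero).2 ⟨y, y.2, congrArg Subtype.val hy⟩)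
  obtain ⟨e, j, rfl⟩ := exists_eq_algebraMap_mul_pow_of_mem_adjoin_simple hℓ
    (hζ.map_of_injective (algebraMap F E).injective) haE (θ := b) hb hx (c := algebraMap F E u)
    hxu
  have he : u * (a ^ j)⁻¹ ∈ kummerSubgroup F E ℓ := by
    refine (mem_kummerSubgroup_iff hℓ.ne_zero).2 ⟨e, e.2, ?_⟩
    have hxu' : (e : Ω) ^ ℓ * algebraMap F Ω a ^ j = algebraMap F Ω u := by
      rw [← hb, ← pow_mul, mul_comm ℓ j, pow_mul, ← mul_pow]
      exact hxu
    rw [Units.val_mul, Units.val_inv_eq_inv_val, Units.val_pow_eq_pow_val, map_mul, map_inv₀,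
      map_pow, ← hxu', mul_inv_cancel_right₀ (pow_ne_zero _ ((map_ne_zero _).2 a.ne_zero))]
  simpa using Subgroup.mul_mem _ (Subgroup.mem_sup_left he)
    (Subgroup.mem_sup_right (Subgroup.pow_mem _ (Subgroup.mem_zpowers a) j))

theorem finrank_restrictScalars_adjoin_simple (hℓ : ℓ.Prime) {ζ : F}
    (hζ : IsPrimitiveRoot ζ ℓ) {E : IntermediateField F Ω} {a : Fˣ} {b : Ω}
    (hb : b ^ ℓ = algebraMap F Ω a) :
    Module.finrank F (restrictScalars F E⟮b⟯) =
      Module.finrank F E *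
        (kummerSubgroup F E ℓ).relIndex (kummerSubgroup F E ℓ ⊔ Subgroup.zpowers a) := by
  by_cases ha : a ∈ kummerSubgroup F E ℓ
  · rw [adjoin_simple_eq_bot_of_mem_kummerSubgroup hℓ.ne_zero hζ hb ha,
      restrictScalars_bot_eq_self, sup_eq_left.2 (Subgroup.zpowers_le.2 ha),
      Subgroup.relIndex_self, mul_one]
  have : Fact ℓ.Prime := ⟨hℓ⟩
  have haE (y : E) : y ^ ℓ ≠ algebraMap F E a := fun hy ↦
    ha ((mem_kummerSubgroup_iff hℓ.ne_zero).2 ⟨y, y.2, congrArg Subtype.val hy⟩)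
  rw [Subgroup.relIndex_sup_zpowers_of_pow_mem
      (powSubgroup_le_kummerSubgroup F E ℓ ⟨a, rfl⟩) ha,
    ← finrank_adjoin_simple_of_pow_eq hℓ haE (θ := b) hb]
  exact (Module.finrank_mul_finrank F E E⟮b⟯).symm

theorem kummerSubgroup_bot : kummerSubgroup F (⊥ : IntermediateField F Ω) ℓ = powSubgroup F ℓ :=
  kummerSubgroup_eq_powSubgroup_of_coprime F _ (by
    rw [IntermediateField.finrank_bot]; exact Nat.coprime_one_left ℓ)

theorem adjoin_insert_eq_restrictScalars (x : Ω) (T : Set Ω) :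
    adjoin F (insert x T) = restrictScalars F (adjoin F T)⟮x⟯ := by
  rw [adjoin_adjoin_left, Set.union_singleton]

variable {ι : Type*} {s : Finset ι} {a : ι → Fˣ} {b : ι → Ω}

theorem kummerSubgroup_adjoin_image (hℓ : ℓ.Prime) {ζ : F} (hζ : IsPrimitiveRoot ζ ℓ)
    (hb : ∀ i ∈ s, b i ^ ℓ = algebraMap F Ω (a i)) :
    kummerSubgroup F (adjoin F (b '' s)) ℓ = Subgroup.closure (a '' s) ⊔ powSubgroup F ℓ := by
  classical
  induction s using Finset.induction_on with
  | empty =>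
    rw [Finset.coe_empty, Set.image_empty, Set.image_empty, adjoin_empty, kummerSubgroup_bot,
      Subgroup.closure_empty, bot_sup_eq]
  | insert i s _ ih =>
    rw [Finset.coe_insert, Set.image_insert_eq, Set.image_insert_eq,
      adjoin_insert_eq_restrictScalars,
      kummerSubgroup_restrictScalars_adjoin_simple hℓ hζ (hb i (Finset.mem_insert_self i s)),
      ih fun j hj ↦ hb j (Finset.mem_insert_of_mem hj), ← Set.singleton_union,
      Subgroup.closure_union, ← Subgroup.zpowers_eq_closure, sup_right_comm,
      sup_comm (Subgroup.zpowers _)]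

theorem finrank_adjoin_image_eq_relIndex_kummerSubgroup (hℓ : ℓ.Prime) {ζ : F}
    (hζ : IsPrimitiveRoot ζ ℓ) (hb : ∀ i ∈ s, b i ^ ℓ = algebraMap F Ω (a i)) :
    Module.finrank F (adjoin F (b '' s)) =
      (powSubgroup F ℓ).relIndex (kummerSubgroup F (adjoin F (b '' s)) ℓ) := by
  classical
  induction s using Finset.induction_on with
  | empty =>
    rw [Finset.coe_empty, Set.image_empty, adjoin_empty, kummerSubgroup_bot,
      IntermediateField.finrank_bot, Subgroup.relIndex_self]
  | insert i s _ ih =>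
    have hbi := hb i (Finset.mem_insert_self i s)
    rw [Finset.coe_insert, Set.image_insert_eq, adjoin_insert_eq_restrictScalars,
      finrank_restrictScalars_adjoin_simple hℓ hζ hbi,
      kummerSubgroup_restrictScalars_adjoin_simple hℓ hζ hbi,
      ih fun j hj ↦ hb j (Finset.mem_insert_of_mem hj),
      Subgroup.relIndex_mul_relIndex _ _ _ (powSubgroup_le_kummerSubgroup F _ ℓ) le_sup_left]

end IntermediateField

theorem cycKummerField_eq_restrictScalars_adjoin {K : Type*} [Field K] {ℓ : ℕ} (hℓ : ℓ ≠ 0)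
    {G : Subgroup Kˣ} {S : Set Kˣ} (hS : Subgroup.closure S = G) {ρ : Kˣ → AlgebraicClosure K}
    (hρ : ∀ s ∈ S, ρ s ^ ℓ = algebraMap K _ s) :
    cycKummerField K ℓ G = restrictScalars K (adjoin (cycField K ℓ) (ρ '' S)) := by
  rw [restrictScalars_adjoin]
  apply le_antisymm
  · set R := adjoin K ((cycField K ℓ : Set (AlgebraicClosure K)) ∪ ρ '' S)
    have hμ (z : AlgebraicClosure K) (hz : z ^ ℓ = 1) : z ∈ R :=
      subset_adjoin _ _ (Or.inl (subset_adjoin _ _ hz))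
    have hG : G ≤ kummerSubgroup K R ℓ := by
      rw [← hS, Subgroup.closure_le]
      exact fun s hs ↦ (mem_kummerSubgroup_iff hℓ).2
        ⟨ρ s, subset_adjoin _ _ (Or.inr ⟨s, hs, rfl⟩), hρ s hs⟩
    rw [cycKummerField, adjoin_le_iff]
    rintro x (hx | ⟨g, hg, hxg⟩)
    · exact hμ x hx
    · exact mem_of_pow_eq_of_mem_kummerSubgroup hℓ hμ (hG hg) hxg
  · rw [adjoin_le_iff]
    rintro x (hx | ⟨s, hs, rfl⟩)
    · exact adjoin.mono _ _ _ (fun z hz ↦ Or.inl hz) hx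
    · exact subset_adjoin _ _ (Or.inr ⟨s, hS ▸ Subgroup.subset_closure hs, hρ s hs⟩)

theorem rank_invariance_and_kummer_degree_general
    (K : Type*) [Field K] [NumberField K] (ℓ : ℕ) (hℓ : ℓ.Prime)
    (hdeg : Module.finrank K (cycField K ℓ) = ℓ - 1)
    (G : Subgroup Kˣ) (hFG : G.FG)
    (rℓ : ℕ)
    (hr : Nat.card (↥G ⧸ (powSubgroup K ℓ).subgroupOf G) = ℓ ^ rℓ) :
    Nat.card
      (↥(G.map (Units.map ((algebraMap K ↥(cycField K ℓ)).toMonoidHom))) ⧸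
        (powSubgroup (↥(cycField K ℓ)) ℓ).subgroupOf
          (G.map (Units.map ((algebraMap K ↥(cycField K ℓ)).toMonoidHom)))) = ℓ ^ rℓ ∧
    Module.finrank K ↥(cycKummerField K ℓ G) = ℓ ^ rℓ * (ℓ - 1) := by
  have : NeZero ℓ := ⟨hℓ.ne_zero⟩
  set L := cycField K ℓ
  set φ : Kˣ →* Lˣ := Units.map (algebraMap K L).toMonoidHom
  have : FiniteDimensional K L := .of_finrank_pos (by rw [hdeg]; have := hℓ.two_le; omega)
  have hrank : (powSubgroup L ℓ).relIndex (G.map φ) = ℓ ^ rℓ := by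
    rw [← Subgroup.relIndex_comap]
    change (kummerSubgroup K L ℓ).relIndex G = _
    rw [kummerSubgroup_eq_powSubgroup_of_coprime K L (by
      rw [hdeg, Nat.coprime_self_sub_left hℓ.one_le]; exact Nat.coprime_one_left ℓ)]
    exact hr
  refine ⟨hrank, ?_⟩
  obtain ⟨ζ, hζ⟩ := HasEnoughRootsOfUnity.exists_primitiveRoot (AlgebraicClosure K) ℓ
  have hζL : IsPrimitiveRoot (⟨ζ, subset_adjoin K _ hζ.pow_eq_one⟩ : L) ℓ :=
    hζ.of_map_of_injective (f := algebraMap L _) Subtype.val_injective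
  obtain ⟨S, rfl⟩ := hFG
  choose ρ hρ using fun u : Kˣ ↦
    IsAlgClosed.exists_pow_nat_eq (algebraMap K (AlgebraicClosure K) u) hℓ.pos
  have hρL (s : Kˣ) (_ : s ∈ S) : ρ s ^ ℓ = algebraMap L _ (φ s) :=
    (hρ s).trans (IsScalarTower.algebraMap_apply K L _ s)
  rw [cycKummerField_eq_restrictScalars_adjoin hℓ.ne_zero rfl fun s _ ↦ hρ s]
  refine (Module.finrank_mul_finrank K L (adjoin L (ρ '' S))).symm.trans ?_
  rw [hdeg, finrank_adjoin_image_eq_relIndex_kummerSubgroup hℓ hζL hρL,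
    kummerSubgroup_adjoin_image hℓ hζL hρL, Subgroup.relIndex_sup_right,
    ← MonoidHom.map_closure, hrank, mul_comm]

theorem rank_invariance_and_kummer_degree
    (K : Type*) [Field K] [NumberField K] (ℓ : ℕ) (hℓ : ℓ.Prime) (hodd : Odd ℓ)
    (hζ : ¬ ∃ x : K, IsPrimitiveRoot x ℓ)
    (hdeg : Module.finrank K (cycField K ℓ) = ℓ - 1)
    (G : Subgroup Kˣ) (hFG : G.FG)
    (hTF : ∀ g ∈ G, g ≠ 1 → ¬ IsOfFinOrder g)
    (rℓ : ℕ)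
    (hr : Nat.card (↥G ⧸ (powSubgroup K ℓ).subgroupOf G) = ℓ ^ rℓ) :
    Nat.card
      (↥(G.map (Units.map ((algebraMap K ↥(cycField K ℓ)).toMonoidHom))) ⧸
        (powSubgroup (↥(cycField K ℓ)) ℓ).subgroupOf
          (G.map (Units.map ((algebraMap K ↥(cycField K ℓ)).toMonoidHom)))) = ℓ ^ rℓ ∧
    Module.finrank K ↥(cycKummerField K ℓ G) = ℓ ^ rℓ * (ℓ - 1) :=
  rank_invariance_and_kummer_degree_general K ℓ hℓ hdeg G hFG rℓ hr
end
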